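/- Let b > 0, L ≥ 0, and let u, v : [0,b] → ℝ be continuous with radial averages ũ, ṽ satisfying |u(r) − ũ(r)| ≤ L·r and |v(r) − ṽ(r)| ≤ L·r for all r ∈ (0,b]. Define g_u(r) := exp(−∫_r^b (1/s)(u(s) − ũ(s))² ds) and g_v(r) := exp(−∫_r^b (1/s)(v(s) − ṽ(s))² ds). Then sup_{r ∈ (0,b]} |g_u(r) − g_v(r)| ≤ 6·L·√b·(∫_0^b (u(s) − v(s))² ds)^{1/2}. -/

import Mathlib

/-!
Since `x ↦ exp (-x)` is 1-Lipschitz on `[0, ∞)`, it suffices to bound the difference of the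
exponents. With `A = u - ũ` and `B = v - ṽ` the integrands differ by `(A + B)(A - B) / s`, where
`|A + B| ≤ 2 L s` and `|A - B| ≤ |u - v| + |ũ - ṽ|`. Cauchy–Schwarz on `[0, s]` gives
`|ũ(s) - ṽ(s)| ≤ ‖u - v‖₂ / √s`, and integrating over `[r, b]` with `∫ |u - v| ≤ √b ‖u - v‖₂`
and `∫ s^(-1/2) ≤ 2 √b` yields `2 L (1 + 2) √b ‖u - v‖₂`.
-/

open MeasureTheory intervalIntegral Set Real

lemma abs_exp_neg_sub_exp_neg_le {x y : ℝ} (hx : 0 ≤ x) (hy : 0 ≤ y) :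
    |exp (-x) - exp (-y)| ≤ |x - y| := by
  have one_sided : ∀ a c : ℝ, 0 ≤ a → exp (-a) - exp (-c) ≤ |a - c| := by
    intro a c ha
    have hexp : exp (-c) = exp (-a) * exp (a - c) := by rw [← exp_add]; ring_nf
    have h1 : exp (-a) ≤ 1 := exp_le_one_iff.2 (by linarith)
    have h2 : a - c + 1 ≤ exp (a - c) := add_one_le_exp _
    have h3 : c - a ≤ |a - c| := by rw [abs_sub_comm]; exact le_abs_self _
    nlinarith [exp_pos (-a), abs_nonneg (a - c)]
  exact abs_sub_le_iff.2 ⟨one_sided x y hx, by rw [abs_sub_comm]; exact one_sided y x hy⟩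

lemma abs_inv_mul_sq_sub_inv_mul_sq_le {s L a c : ℝ} (hs : 0 < s) (ha : |a| ≤ L * s)
    (hc : |c| ≤ L * s) : |1 / s * a ^ 2 - 1 / s * c ^ 2| ≤ 2 * L * |a - c| := by
  have hsum : |a + c| ≤ 2 * L * s := (abs_add_le a c).trans (by linarith)
  rw [← mul_sub, sq_sub_sq, abs_mul, abs_mul, abs_of_pos (one_div_pos.2 hs)]
  calc 1 / s * (|a + c| * |a - c|) ≤ 1 / s * (2 * L * s * |a - c|) := by gcongr
    _ = 2 * L * |a - c| := by field_simp

lemma memLp_two_restrict_Ioc {f : ℝ → ℝ} {a b : ℝ} (hf : ContinuousOn f (Icc a b)) :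
    MemLp f 2 (volume.restrict (Ioc a b)) :=
  (memLp_two_iff_integrable_sq
    ((hf.mono Ioc_subset_Icc_self).aestronglyMeasurable measurableSet_Ioc)).2
    ((hf.pow 2).integrableOn_Icc.mono_set Ioc_subset_Icc_self)

lemma integral_abs_le_sqrt_mul_sqrt_integral_sq {f : ℝ → ℝ} {a b : ℝ} (hab : a ≤ b)
    (hf : MemLp f 2 (volume.restrict (Ioc a b))) :
    ∫ x in a..b, |f x| ≤ √(b - a) * √(∫ x in a..b, f x ^ 2) := by
  have holder := integral_mul_le_Lp_mul_Lq_of_nonneg (μ := volume.restrict (Ioc a b))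
    HolderConjugate.two_two (ae_of_all _ fun x => abs_nonneg (f x))
    (ae_of_all _ fun _ => zero_le_one) (by rw [ENNReal.ofReal_ofNat]; exact hf.abs) (memLp_const 1)
  simp only [mul_one, MeasureTheory.integral_const, rpow_two, sq_abs, ← sqrt_eq_rpow] at holder
  rw [intervalIntegral.integral_of_le hab, intervalIntegral.integral_of_le hab, mul_comm]
  simpa [Real.volume_real_Ioc_of_le hab] using holder

noncomputable def radialAverage (f : ℝ → ℝ) (r : ℝ) : ℝ := (1 / r) * ∫ s in (0:ℝ)..r, f s

lemma radialAverage_sub {f g : ℝ → ℝ} {r : ℝ} (hf : IntervalIntegrable f volume 0 r)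
    (hg : IntervalIntegrable g volume 0 r) :
    radialAverage (fun s => f s - g s) r = radialAverage f r - radialAverage g r := by
  rw [radialAverage, radialAverage, radialAverage, intervalIntegral.integral_sub hf hg, mul_sub]

lemma continuousOn_radialAverage {f : ℝ → ℝ} {b : ℝ} (hf : ContinuousOn f (Icc 0 b)) :
    ContinuousOn (radialAverage f) (Ioc 0 b) := by
  intro x hx
  have hb : 0 ≤ b := hx.1.le.trans hx.2
  have hprim : ContinuousOn (fun y => ∫ t in (0:ℝ)..y, f t) (Icc 0 b) := by
    simpa [uIcc_of_le hb] using
      intervalIntegral.continuousOn_primitive_interval (f := f) (a := 0) (b := b)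
        (by simpa [uIcc_of_le hb] using hf.integrableOn_Icc (μ := volume))
  exact ((continuousOn_const.div continuousOn_id fun y hy => hy.1.ne').mul
    (hprim.mono Ioc_subset_Icc_self)) x hx

lemma abs_radialAverage_le {f : ℝ → ℝ} {r b : ℝ} (hf : ContinuousOn f (Icc 0 b)) (hr : 0 < r)
    (hrb : r ≤ b) : |radialAverage f r| ≤ √(∫ s in (0:ℝ)..b, f s ^ 2) * (√r)⁻¹ := by
  have hf' : ContinuousOn f (Icc 0 r) := hf.mono (Icc_subset_Icc_right hrb)
  have hmono : ∫ s in (0:ℝ)..r, f s ^ 2 ≤ ∫ s in (0:ℝ)..b, f s ^ 2 :=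
    intervalIntegral.integral_mono_interval le_rfl hr.le hrb (ae_of_all _ fun s => sq_nonneg _)
      ((hf.pow 2).intervalIntegrable_of_Icc (hr.le.trans hrb))
  calc |radialAverage f r| = 1 / r * |∫ s in (0:ℝ)..r, f s| := by
        rw [radialAverage, abs_mul, abs_of_pos (one_div_pos.2 hr)]
    _ ≤ 1 / r * (√r * √(∫ s in (0:ℝ)..r, f s ^ 2)) := by
        gcongr
        refine (intervalIntegral.abs_integral_le_integral_abs hr.le).trans ?_
        simpa using integral_abs_le_sqrt_mul_sqrt_integral_sq hr.le (memLp_two_restrict_Ioc hf')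
    _ ≤ 1 / r * (√r * √(∫ s in (0:ℝ)..b, f s ^ 2)) := by gcongr
    _ = √(∫ s in (0:ℝ)..b, f s ^ 2) * (√r)⁻¹ := by
        nth_rewrite 1 [← mul_self_sqrt hr.le]
        field_simp

lemma inv_sqrt_eq_rpow {x : ℝ} (hx : 0 ≤ x) : (√x)⁻¹ = x ^ (-(1 / 2) : ℝ) := by
  rw [sqrt_eq_rpow, rpow_neg hx]

lemma intervalIntegrable_inv_sqrt {a b : ℝ} (ha : 0 ≤ a) (hb : 0 ≤ b) :
    IntervalIntegrable (fun x => (√x)⁻¹) volume a b :=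
  (intervalIntegrable_rpow' (by norm_num)).congr_uIoo fun x hx =>
    (inv_sqrt_eq_rpow ((le_min ha hb).trans hx.1.le)).symm

lemma integral_inv_sqrt {a b : ℝ} (ha : 0 ≤ a) (hb : 0 ≤ b) :
    ∫ x in a..b, (√x)⁻¹ = 2 * (√b - √a) := by
  rw [intervalIntegral.integral_congr fun x hx => inv_sqrt_eq_rpow ((le_min ha hb).trans hx.1),
    integral_rpow (Or.inl (by norm_num)), sqrt_eq_rpow, sqrt_eq_rpow]
  norm_num
  ring

lemma intervalIntegrable_abs_add_mul_inv_sqrt {f : ℝ → ℝ} {r b : ℝ} (hf : ContinuousOn f (Icc 0 b))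
    (hr : 0 ≤ r) (hrb : r ≤ b) (c : ℝ) :
    IntervalIntegrable (fun s => |f s| + c * (√s)⁻¹) volume r b :=
  ((hf.mono (Icc_subset_Icc_left hr)).abs.intervalIntegrable_of_Icc hrb).add
    ((intervalIntegrable_inv_sqrt hr (hr.trans hrb)).const_mul c)

lemma integral_abs_add_mul_inv_sqrt_le {f : ℝ → ℝ} {r b : ℝ} (hf : ContinuousOn f (Icc 0 b))
    (hr : 0 ≤ r) (hrb : r ≤ b) :
    ∫ s in r..b, (|f s| + √(∫ t in (0:ℝ)..b, f t ^ 2) * (√s)⁻¹)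
      ≤ 3 * √b * √(∫ t in (0:ℝ)..b, f t ^ 2) := by
  set W := √(∫ t in (0:ℝ)..b, f t ^ 2)
  have hb : 0 ≤ b := hr.trans hrb
  have habs : ∫ s in r..b, |f s| ≤ √b * W := calc
    ∫ s in r..b, |f s| ≤ ∫ s in (0:ℝ)..b, |f s| :=
      intervalIntegral.integral_mono_interval hr hrb le_rfl (ae_of_all _ fun s => abs_nonneg _)
        (hf.abs.intervalIntegrable_of_Icc hb)
    _ ≤ √b * W := by
      simpa using integral_abs_le_sqrt_mul_sqrt_integral_sq hb (memLp_two_restrict_Ioc hf)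
  rw [intervalIntegral.integral_add
      ((hf.mono (Icc_subset_Icc_left hr)).abs.intervalIntegrable_of_Icc hrb)
      ((intervalIntegrable_inv_sqrt hr hb).const_mul W),
    intervalIntegral.integral_const_mul, integral_inv_sqrt hr hb]
  nlinarith [mul_nonneg (sqrt_nonneg _ : 0 ≤ W) (sqrt_nonneg r)]

lemma intervalIntegrable_inv_mul_sq_sub {f ft : ℝ → ℝ} {r b : ℝ} (hf : ContinuousOn f (Icc 0 b))
    (hft : ∀ s ∈ Ioc 0 b, ft s = radialAverage f s) (hr : 0 < r) (hrb : r ≤ b) :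
    IntervalIntegrable (fun s => 1 / s * (f s - ft s) ^ 2) volume r b := by
  have hsub : Icc r b ⊆ Ioc 0 b := fun s hs => ⟨hr.trans_le hs.1, hs.2⟩
  have hft_cont : ContinuousOn ft (Icc r b) :=
    ((continuousOn_radialAverage hf).mono hsub).congr fun s hs => hft s (hsub hs)
  refine ContinuousOn.intervalIntegrable_of_Icc hrb ?_
  exact (continuousOn_const.div continuousOn_id fun s hs => (hr.trans_le hs.1).ne').mul
    (((hf.mono (hsub.trans Ioc_subset_Icc_self)).sub hft_cont).pow 2)

lemma abs_inv_mul_sq_sub_radialAverage_sub_le {u v ut vt : ℝ → ℝ} {b L s : ℝ} (hL : 0 ≤ L)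
    (hu : ContinuousOn u (Icc 0 b)) (hv : ContinuousOn v (Icc 0 b))
    (hut : ∀ r ∈ Ioc 0 b, ut r = radialAverage u r) (hvt : ∀ r ∈ Ioc 0 b, vt r = radialAverage v r)
    (hub : ∀ r ∈ Ioc 0 b, |u r - ut r| ≤ L * r) (hvb : ∀ r ∈ Ioc 0 b, |v r - vt r| ≤ L * r)
    (hs : s ∈ Ioc 0 b) :
    |1 / s * (u s - ut s) ^ 2 - 1 / s * (v s - vt s) ^ 2|
      ≤ 2 * L * (|u s - v s| + √(∫ t in (0:ℝ)..b, (u t - v t) ^ 2) * (√s)⁻¹) := by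
  have hint : ∀ {f : ℝ → ℝ}, ContinuousOn f (Icc 0 b) → IntervalIntegrable f volume 0 s :=
    fun hf => (hf.mono (Icc_subset_Icc_right hs.2)).intervalIntegrable_of_Icc hs.1.le
  have hdiff : ut s - vt s = radialAverage (fun t => u t - v t) s := by
    rw [radialAverage_sub (hint hu) (hint hv), hut s hs, hvt s hs]
  calc |1 / s * (u s - ut s) ^ 2 - 1 / s * (v s - vt s) ^ 2|
      ≤ 2 * L * |(u s - ut s) - (v s - vt s)| :=
        abs_inv_mul_sq_sub_inv_mul_sq_le hs.1 (hub s hs) (hvb s hs)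
    _ = 2 * L * |(u s - v s) - radialAverage (fun t => u t - v t) s| := by
        rw [← hdiff]; ring_nf
    _ ≤ 2 * L * (|u s - v s| + √(∫ t in (0:ℝ)..b, (u t - v t) ^ 2) * (√s)⁻¹) := by
        have havg := abs_radialAverage_le (f := fun t => u t - v t) (hu.sub hv) hs.1 hs.2
        gcongr
        linarith [abs_sub (u s - v s) (radialAverage (fun t => u t - v t) s)]

theorem stmt11_general (b L : ℝ) (hL : 0 ≤ L)
    (u v ut vt : ℝ → ℝ)
    (hu : ContinuousOn u (Set.Icc 0 b)) (hv : ContinuousOn v (Set.Icc 0 b))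
    (hut : ∀ r ∈ Set.Ioc 0 b, ut r = (1 / r) * ∫ s in (0:ℝ)..r, u s)
    (hvt : ∀ r ∈ Set.Ioc 0 b, vt r = (1 / r) * ∫ s in (0:ℝ)..r, v s)
    (hub : ∀ r ∈ Set.Ioc 0 b, |u r - ut r| ≤ L * r)
    (hvb : ∀ r ∈ Set.Ioc 0 b, |v r - vt r| ≤ L * r) :
    ∀ r ∈ Set.Ioc 0 b,
      |Real.exp (-(∫ s in r..b, (1 / s) * (u s - ut s) ^ 2)) -
        Real.exp (-(∫ s in r..b, (1 / s) * (v s - vt s) ^ 2))|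
        ≤ 6 * L * Real.sqrt b * Real.sqrt (∫ s in (0:ℝ)..b, (u s - v s) ^ 2) := by
  rintro r ⟨hr, hrb⟩
  set W := √(∫ s in (0:ℝ)..b, (u s - v s) ^ 2)
  have hnonneg : ∀ f : ℝ → ℝ, 0 ≤ ∫ s in r..b, 1 / s * f s ^ 2 := fun f =>
    intervalIntegral.integral_nonneg hrb fun s hs =>
      mul_nonneg (one_div_nonneg.2 (hr.le.trans hs.1)) (sq_nonneg _)
  calc _ ≤ |(∫ s in r..b, 1 / s * (u s - ut s) ^ 2) - ∫ s in r..b, 1 / s * (v s - vt s) ^ 2| :=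
        abs_exp_neg_sub_exp_neg_le (hnonneg _) (hnonneg _)
    _ = ‖∫ s in r..b, (1 / s * (u s - ut s) ^ 2 - 1 / s * (v s - vt s) ^ 2)‖ := by
        rw [intervalIntegral.integral_sub (intervalIntegrable_inv_mul_sq_sub hu hut hr hrb)
          (intervalIntegrable_inv_mul_sq_sub hv hvt hr hrb), Real.norm_eq_abs]
    _ ≤ ∫ s in r..b, 2 * L * (|u s - v s| + W * (√s)⁻¹) :=
        intervalIntegral.norm_integral_le_of_norm_le hrb
          (ae_of_all _ fun s hs => abs_inv_mul_sq_sub_radialAverage_sub_le hL hu hv hut hvt hub hvb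
            ⟨hr.trans hs.1, hs.2⟩)
          ((intervalIntegrable_abs_add_mul_inv_sqrt (hu.sub hv) hr.le hrb W).const_mul _)
    _ = 2 * L * ∫ s in r..b, (|u s - v s| + W * (√s)⁻¹) := intervalIntegral.integral_const_mul _ _
    _ ≤ 2 * L * (3 * √b * W) := by
        gcongr; exact integral_abs_add_mul_inv_sqrt_le (hu.sub hv) hr.le hrb
    _ = 6 * L * √b * W := by ring

/-- Metric reconstruction error estimate (Lemma 4.1(d)):
`sup_{(0,b]} |g_u - g_v| ≤ 6 L √b ‖u - v‖_{L²(0,b)}`, where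
`g_u(r) = exp(-∫_r^b (1/s)(u - ũ)² ds)` and similarly for `v`. -/
theorem stmt11 (b L : ℝ) (hb : 0 < b) (hL : 0 ≤ L)
    (u v ut vt : ℝ → ℝ)
    (hu : ContinuousOn u (Set.Icc 0 b)) (hv : ContinuousOn v (Set.Icc 0 b))
    (hut : ∀ r ∈ Set.Ioc 0 b, ut r = (1 / r) * ∫ s in (0:ℝ)..r, u s)
    (hvt : ∀ r ∈ Set.Ioc 0 b, vt r = (1 / r) * ∫ s in (0:ℝ)..r, v s)
    (hub : ∀ r ∈ Set.Ioc 0 b, |u r - ut r| ≤ L * r)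
    (hvb : ∀ r ∈ Set.Ioc 0 b, |v r - vt r| ≤ L * r) :
    ∀ r ∈ Set.Ioc 0 b,
      |Real.exp (-(∫ s in r..b, (1 / s) * (u s - ut s) ^ 2)) -
        Real.exp (-(∫ s in r..b, (1 / s) * (v s - vt s) ^ 2))|
        ≤ 6 * L * Real.sqrt b * Real.sqrt (∫ s in (0:ℝ)..b, (u s - v s) ^ 2) :=
  stmt11_general b L hL u v ut vt hu hv hut hvt hub hvb
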